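/- arXiv:2011.11463 — 2 statements merged into one kernel-verified Lean document; each statement's English description precedes it below -/
import Mathlib

section
/- Bounded number of updates: for every slot t ∈ {1,…,T}, the number of pairs (j,τ) with 1 ≤ j ≤ t ≤ τ ≤ T for which the update condition of Alg. 1 holds at iteration j of slot τ (i.e., the current value of Σ_{σ=j}^{τ} x_{k*_σ}(σ) is strictly less than 1 when iteration j of slot τ is processed) is at most ⌊C_1⌋. -/
open scoped Classical
open MeasureTheory

noncomputable section

/-- Age of information of user `i` under schedule `d`:
`a_i(0) = 0`, and `a_i(t) = 0` if `1_{i,d(t)}(t) = 1`, `a_i(t) = a_i(t-1) + 1` otherwise. -/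
def age (ind : ℕ → ℕ → ℕ → ℝ) (d : ℕ → ℕ) (i : ℕ) : ℕ → ℕ
  | 0 => 0
  | t + 1 => if ind i (d (t + 1)) (t + 1) = 1 then 0 else age ind d i t + 1

/-- Inner loop of Alg. 1 at a fixed slot: `innerLoop Ck θ ps j` is the value of the current
slot's `x`-variable after processing iterations `1, …, j`, where `ps j` is the (final)
contribution `Σ_{τ=j}^{t-1} x_{k*_τ}(τ)` of the earlier slots.  At iteration `j` the current
value of `Σ_{τ=j}^{t} x_{k*_τ}(τ)` is `ps j + innerLoop Ck θ ps (j-1)`; if it is `< 1`, the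
`x`-variable is increased by `(1/Ck) Σ_{τ=j}^{t} x_{k*_τ}(τ) + 1/(θ·Ck)`. -/
def innerLoop (Ck θ : ℝ) (ps : ℕ → ℝ) : ℕ → ℝ
  | 0 => 0
  | j + 1 =>
      if ps (j + 1) + innerLoop Ck θ ps j < 1 then
        innerLoop Ck θ ps j + (ps (j + 1) + innerLoop Ck θ ps j) / Ck + 1 / (θ * Ck)
      else innerLoop Ck θ ps j

/-- `xvec Ck θ t τ` : the value of `x_{k*_τ}(τ)` after Alg. 1 has processed slots `1, …, t`
(`Ck τ` stands for the cost `C_{k*_τ}` used in slot `τ`). -/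
def xvec (Ck : ℕ → ℝ) (θ : ℝ) : ℕ → ℕ → ℝ
  | 0, _ => 0
  | t + 1, τ =>
      if τ = t + 1 then
        innerLoop (Ck (t + 1)) θ (fun j => ∑ σ ∈ Finset.Ico j (t + 1), xvec Ck θ t σ) (t + 1)
      else xvec Ck θ t τ

/-- Final value of `x_{k*_t}(t)` computed by Alg. 1. -/
def xval (Ck : ℕ → ℝ) (θ : ℝ) (t : ℕ) : ℝ := xvec Ck θ t t

/-- `psFun Ck θ t j = Σ_{σ=j}^{t-1} x_{k*_σ}(σ)` (final values of the slots before `t`). -/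
def psFun (Ck : ℕ → ℝ) (θ : ℝ) (t : ℕ) (j : ℕ) : ℝ :=
  ∑ σ ∈ Finset.Ico j t, xvec Ck θ (t - 1) σ

/-- The update condition of Alg. 1 at iteration `j` of slot `t`: the current value of
`Σ_{τ=j}^{t} x_{k*_τ}(τ)` (earlier slots final, slot `t` after iterations `1,…,j-1`) is `< 1`. -/
def algCond (Ck : ℕ → ℝ) (θ : ℝ) (t j : ℕ) : Prop :=
  psFun Ck θ t j + innerLoop (Ck t) θ (psFun Ck θ t) (j - 1) < 1

/-- Final value of `z_{i,j}(t)` computed by Alg. 1 (it is the same for every user `i`). -/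
def zval (Ck : ℕ → ℝ) (θ : ℝ) (j t : ℕ) : ℝ :=
  if algCond Ck θ t j then
    1 - (psFun Ck θ t j + innerLoop (Ck t) θ (psFun Ck θ t) (j - 1))
  else 0

/-- Final value of `y_{i,j}(t)` computed by Alg. 1 (it is the same for every user `i`). -/
def yval (Ck : ℕ → ℝ) (θ : ℝ) (N : ℕ) (j t : ℕ) : ℝ :=
  if algCond Ck θ t j then 1 / N else 0

/-- `k*_t`: the minimum power level `k ≥ 1` with `1_{i,k}(t) = 1` for every user `i`. -/
def kstar (ind : ℕ → ℕ → ℕ → ℝ) (N : ℕ) (t : ℕ) : ℕ :=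
  sInf {k : ℕ | 1 ≤ k ∧ ∀ i ∈ Finset.Icc 1 N, ind i k t = 1}

/-- `X(t) = Σ_{τ=1}^t min{x_{k*_τ}(τ), 1}`, used by Alg. 2 (so `X(0) = 0`). -/
def bigX (Ck : ℕ → ℝ) (θ : ℝ) (t : ℕ) : ℝ :=
  ∑ τ ∈ Finset.Icc 1 t, min (xval Ck θ τ) 1

/-- Alg. 2 transmits in slot `t` for randomness `u` iff `u + k ∈ [X(t-1), X(t))` for some
integer `k ≥ 0`. -/
def transmits (Ck : ℕ → ℝ) (θ : ℝ) (u : ℝ) (t : ℕ) : Prop :=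
  ∃ k : ℕ, bigX Ck θ (t - 1) ≤ u + k ∧ u + k < bigX Ck θ t

/-- The decision of Alg. 2 in slot `t` for randomness `u`: transmit with power `k*_t`, or idle. -/
def dAlg (ind : ℕ → ℕ → ℕ → ℝ) (N : ℕ) (Ck : ℕ → ℝ) (θ : ℝ) (u : ℝ) (t : ℕ) : ℕ :=
  if transmits Ck θ u t then kstar ind N t else 0

/-- The constant `θ = (1 + 1/C_M)^⌊C_1⌋ − 1` of Alg. 1. -/
def thetaOf (C : ℕ → ℝ) (M : ℕ) : ℝ := (1 + 1 / C M) ^ ⌊C 1⌋ - 1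

-- auxiliary lemmas
lemma innerLoop_zero (Ck θ : ℝ) (ps : ℕ → ℝ) : innerLoop Ck θ ps 0 = 0 := rfl

lemma innerLoop_succ (Ck θ : ℝ) (ps : ℕ → ℝ) (j : ℕ) :
    innerLoop Ck θ ps (j + 1) =
      if ps (j + 1) + innerLoop Ck θ ps j < 1 then
        innerLoop Ck θ ps j + (ps (j + 1) + innerLoop Ck θ ps j) / Ck + 1 / (θ * Ck)
      else innerLoop Ck θ ps j := rfl

lemma innerLoop_nonneg {Ck θ : ℝ} (hC : 0 < Ck) (hθ : 0 < θ) {ps : ℕ → ℝ}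
    (hps : ∀ j, 0 ≤ ps j) : ∀ j, 0 ≤ innerLoop Ck θ ps j := by
  intro j
  induction j with
  | zero => simp [innerLoop_zero]
  | succ j ih =>
    rw [innerLoop_succ]
    split
    · have h1 : 0 ≤ (ps (j + 1) + innerLoop Ck θ ps j) / Ck :=
        div_nonneg (add_nonneg (hps _) ih) hC.le
      have h2 : (0:ℝ) ≤ 1 / (θ * Ck) := by positivity
      linarith
    · exact ih

lemma xvec_zero (Ck : ℕ → ℝ) (θ : ℝ) (τ : ℕ) : xvec Ck θ 0 τ = 0 := rfl

lemma xvec_succ (Ck : ℕ → ℝ) (θ : ℝ) (t τ : ℕ) :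
    xvec Ck θ (t + 1) τ =
      if τ = t + 1 then
        innerLoop (Ck (t + 1)) θ (fun j => ∑ σ ∈ Finset.Ico j (t + 1), xvec Ck θ t σ) (t + 1)
      else xvec Ck θ t τ := rfl

lemma xvec_nonneg {θ : ℝ} (Ck : ℕ → ℝ) (hC : ∀ τ, 0 < Ck τ) (hθ : 0 < θ) :
    ∀ t τ, 0 ≤ xvec Ck θ t τ := by
  intro t
  induction t with
  | zero => intro τ; simp [xvec_zero]
  | succ t ih =>
    intro τ
    rw [xvec_succ]
    split
    · exact innerLoop_nonneg (hC _) hθ (fun j => Finset.sum_nonneg fun σ _ => ih σ) _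
    · exact ih τ

lemma xvec_eq_xval (Ck : ℕ → ℝ) (θ : ℝ) :
    ∀ t τ, τ ≤ t → xvec Ck θ t τ = xval Ck θ τ := by
  intro t
  induction t with
  | zero => intro τ hτ; interval_cases τ; rfl
  | succ t ih =>
    intro τ hτ
    rcases eq_or_lt_of_le hτ with h | h
    · subst h; rfl
    · have hτt : τ ≤ t := Nat.lt_succ_iff.mp h
      rw [xvec_succ, if_neg (by omega), ih τ hτt]

lemma psFun_eq (Ck : ℕ → ℝ) (θ : ℝ) (τ j : ℕ) :
    psFun Ck θ τ j = ∑ σ ∈ Finset.Ico j τ, xval Ck θ σ := by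
  unfold psFun
  refine Finset.sum_congr rfl fun σ hσ => ?_
  have hσ' : σ < τ := (Finset.mem_Ico.mp hσ).2
  exact xvec_eq_xval Ck θ (τ - 1) σ (by omega)

lemma xval_succ (Ck : ℕ → ℝ) (θ : ℝ) (s : ℕ) :
    xval Ck θ (s + 1) = innerLoop (Ck (s + 1)) θ (psFun Ck θ (s + 1)) (s + 1) := by
  have h : (fun j => ∑ σ ∈ Finset.Ico j (s + 1), xvec Ck θ s σ) = psFun Ck θ (s + 1) := by
    funext j; simp [psFun]
  unfold xval
  rw [xvec_succ, if_pos rfl, h]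

def Wfun (Ck : ℕ → ℝ) (θ : ℝ) (t τ : ℕ) : ℝ := ∑ σ ∈ Finset.Ico t τ, xval Ck θ σ

def phiFun (Ck : ℕ → ℝ) (θ : ℝ) (t τ j : ℕ) : ℝ :=
  Wfun Ck θ t τ + innerLoop (Ck τ) θ (psFun Ck θ τ) j + 1 / θ

def cFun (Ck : ℕ → ℝ) (θ : ℝ) (t τ j : ℕ) : ℕ :=
  ∑ j' ∈ Finset.Icc 1 (min j t), if algCond Ck θ τ j' then 1 else 0

def gFun (Ck : ℕ → ℝ) (θ : ℝ) (t τ : ℕ) : ℕ :=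
  ∑ τ' ∈ Finset.Icc t τ, ∑ j' ∈ Finset.Icc 1 t, if algCond Ck θ τ' j' then 1 else 0


lemma inner_invariant (Ck : ℕ → ℝ) (CM θ : ℝ) (Fn : ℕ)
    (hCk1 : ∀ τ, 1 ≤ Ck τ) (hCkM : ∀ τ, Ck τ ≤ CM)
    (hθ : 0 < θ) (hθ1 : θ + 1 = (1 + 1 / CM) ^ Fn)
    (t : ℕ) (ht : 1 ≤ t) (τ : ℕ) (htτ : t ≤ τ) (a : ℕ) (ha : a ≤ Fn)
    (h0 : 1 / θ * (1 + 1 / CM) ^ a ≤ phiFun Ck θ t τ 0) :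
    ∀ j, 1 / θ * (1 + 1 / CM) ^ (a + cFun Ck θ t τ j) ≤ phiFun Ck θ t τ j
        ∧ a + cFun Ck θ t τ j ≤ Fn := by
  have hCkpos : ∀ σ, (0:ℝ) < Ck σ := fun σ => lt_of_lt_of_le zero_lt_one (hCk1 σ)
  have hCM : (1:ℝ) ≤ CM := (hCk1 0).trans (hCkM 0)
  have hCMpos : (0:ℝ) < CM := lt_of_lt_of_le zero_lt_one hCM
  have hB : (1:ℝ) < 1 + 1 / CM := by
    have : (0:ℝ) < 1 / CM := by positivity
    linarith
  have hBpos : (0:ℝ) < 1 + 1 / CM := by linarith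
  have hxval : ∀ σ, 0 ≤ xval Ck θ σ := fun σ => xvec_nonneg Ck hCkpos hθ σ σ
  have hps : ∀ j, 0 ≤ psFun Ck θ τ j := by
    intro j; rw [psFun_eq]; exact Finset.sum_nonneg fun σ _ => hxval σ
  have hI : ∀ j, 0 ≤ innerLoop (Ck τ) θ (psFun Ck θ τ) j :=
    innerLoop_nonneg (hCkpos τ) hθ hps
  have hW : 0 ≤ Wfun Ck θ t τ := Finset.sum_nonneg fun σ _ => hxval σ
  intro j
  induction j with
  | zero =>
    have hc0 : cFun Ck θ t τ 0 = 0 := by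
      simp [cFun, Nat.min_eq_left (Nat.zero_le t)]
    rw [hc0]
    exact ⟨by simpa using h0, by simpa using ha⟩
  | succ j ih =>
    obtain ⟨ih1, ih2⟩ := ih
    have hcond_iff : algCond Ck θ τ (j + 1) ↔
        psFun Ck θ τ (j + 1) + innerLoop (Ck τ) θ (psFun Ck θ τ) j < 1 := by
      simp [algCond]
    by_cases hcond : psFun Ck θ τ (j + 1) + innerLoop (Ck τ) θ (psFun Ck θ τ) j < 1
    · have hφsucc : phiFun Ck θ t τ (j + 1) = phiFun Ck θ t τ j +
          ((psFun Ck θ τ (j + 1) + innerLoop (Ck τ) θ (psFun Ck θ τ) j) / Ck τ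
            + 1 / (θ * Ck τ)) := by
        simp only [phiFun]
        rw [innerLoop_succ, if_pos hcond]
        ring
      have hφpos : 0 < phiFun Ck θ t τ j := lt_of_lt_of_le (by positivity) ih1
      by_cases hjt : j + 1 ≤ t
      · -- counted update
        have hcnt : cFun Ck θ t τ (j + 1) = cFun Ck θ t τ j + 1 := by
          simp only [cFun]
          rw [Nat.min_eq_left hjt, Nat.min_eq_left (by omega : j ≤ t),
            Finset.sum_Icc_succ_top (by omega : 1 ≤ j + 1),
            if_pos (hcond_iff.mpr hcond)]
        have hWle : Wfun Ck θ t τ ≤ psFun Ck θ τ (j + 1) := by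
          rw [psFun_eq]
          unfold Wfun
          apply Finset.sum_le_sum_of_subset_of_nonneg
          · intro σ hσ
            simp only [Finset.mem_Ico] at *
            omega
          · intro σ _ _; exact hxval σ
        have hφle : phiFun Ck θ t τ j ≤ psFun Ck θ τ (j + 1)
            + innerLoop (Ck τ) θ (psFun Ck θ τ) j + 1 / θ := by
          simp only [phiFun]; linarith
        have key : phiFun Ck θ t τ j * (1 + 1 / CM) ≤ phiFun Ck θ t τ (j + 1) := by
          rw [hφsucc]
          have h1 : phiFun Ck θ t τ j * (1 + 1 / CM)
              ≤ phiFun Ck θ t τ j * (1 + 1 / Ck τ) := by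
            gcongr
            · exact hCkpos τ
            · exact hCkM τ
          have h2 : phiFun Ck θ t τ j * (1 + 1 / Ck τ)
              = phiFun Ck θ t τ j + phiFun Ck θ t τ j / Ck τ := by ring
          have h3 : phiFun Ck θ t τ j / Ck τ
              ≤ (psFun Ck θ τ (j + 1) + innerLoop (Ck τ) θ (psFun Ck θ τ) j + 1 / θ) / Ck τ := by
            gcongr
            exact (hCkpos τ).le
          have h4 : (psFun Ck θ τ (j + 1) + innerLoop (Ck τ) θ (psFun Ck θ τ) j + 1 / θ) / Ck τ
              = (psFun Ck θ τ (j + 1) + innerLoop (Ck τ) θ (psFun Ck θ τ) j) / Ck τ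
                + 1 / (θ * Ck τ) := by
            rw [add_div, div_div]
          linarith
        have hslt : phiFun Ck θ t τ j < 1 + 1 / θ := by
          have := hφle
          linarith
        have hlt : a + cFun Ck θ t τ j < Fn := by
          by_contra hge
          push_neg at hge
          have hpow : (1 + 1 / CM) ^ Fn ≤ (1 + 1 / CM) ^ (a + cFun Ck θ t τ j) :=
            pow_le_pow_right₀ hB.le hge
          have h5 : 1 / θ * (1 + 1 / CM) ^ (a + cFun Ck θ t τ j) < 1 + 1 / θ :=
            lt_of_le_of_lt ih1 hslt
          have h6 : 1 / θ * (1 + 1 / CM) ^ Fn < 1 + 1 / θ :=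
            lt_of_le_of_lt (by gcongr) h5
          rw [← hθ1] at h6
          have heq : 1 / θ * (θ + 1) = 1 + 1 / θ := by field_simp
          linarith
        refine ⟨?_, by omega⟩
        rw [hcnt]
        calc 1 / θ * (1 + 1 / CM) ^ (a + (cFun Ck θ t τ j + 1))
            = (1 / θ * (1 + 1 / CM) ^ (a + cFun Ck θ t τ j)) * (1 + 1 / CM) := by
              rw [← add_assoc, pow_succ]; ring
          _ ≤ phiFun Ck θ t τ j * (1 + 1 / CM) := by
              exact mul_le_mul_of_nonneg_right ih1 hBpos.le
          _ ≤ phiFun Ck θ t τ (j + 1) := key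
      · -- update not counted (j+1 > t)
        have hcnt : cFun Ck θ t τ (j + 1) = cFun Ck θ t τ j := by
          simp only [cFun]
          rw [Nat.min_eq_right (by omega : t ≤ j + 1), Nat.min_eq_right (by omega : t ≤ j)]
        have hmono : phiFun Ck θ t τ j ≤ phiFun Ck θ t τ (j + 1) := by
          rw [hφsucc]
          have h1 : 0 ≤ (psFun Ck θ τ (j + 1) + innerLoop (Ck τ) θ (psFun Ck θ τ) j) / Ck τ :=
            div_nonneg (add_nonneg (hps _) (hI _)) (hCkpos τ).le
          have h2 : (0:ℝ) ≤ 1 / (θ * Ck τ) :=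
            le_of_lt (one_div_pos.mpr (mul_pos hθ (hCkpos τ)))
          linarith
        rw [hcnt]
        exact ⟨le_trans ih1 hmono, ih2⟩
    · -- no update
      have hφeq : phiFun Ck θ t τ (j + 1) = phiFun Ck θ t τ j := by
        simp only [phiFun]
        rw [innerLoop_succ, if_neg hcond]
      have hcnt : cFun Ck θ t τ (j + 1) = cFun Ck θ t τ j := by
        by_cases hjt : j + 1 ≤ t
        · simp only [cFun]
          rw [Nat.min_eq_left hjt, Nat.min_eq_left (by omega : j ≤ t),
            Finset.sum_Icc_succ_top (by omega : 1 ≤ j + 1),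
            if_neg (fun h => hcond (hcond_iff.mp h)), add_zero]
        · simp only [cFun]
          rw [Nat.min_eq_right (by omega : t ≤ j + 1), Nat.min_eq_right (by omega : t ≤ j)]
      rw [hφeq, hcnt]
      exact ⟨ih1, ih2⟩


lemma outer_invariant (Ck : ℕ → ℝ) (CM θ : ℝ) (Fn : ℕ)
    (hCk1 : ∀ τ, 1 ≤ Ck τ) (hCkM : ∀ τ, Ck τ ≤ CM)
    (hθ : 0 < θ) (hθ1 : θ + 1 = (1 + 1 / CM) ^ Fn)
    (t : ℕ) (ht : 1 ≤ t) :
    ∀ τ, t ≤ τ → 1 / θ * (1 + 1 / CM) ^ gFun Ck θ t τ ≤ phiFun Ck θ t τ τ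
        ∧ gFun Ck θ t τ ≤ Fn := by
  intro τ htτ
  induction τ, htτ using Nat.le_induction with
  | base =>
    have h0 : 1 / θ * (1 + 1 / CM) ^ (0:ℕ) ≤ phiFun Ck θ t t 0 := by
      simp [phiFun, Wfun, innerLoop_zero]
    have H := inner_invariant Ck CM θ Fn hCk1 hCkM hθ hθ1 t ht t le_rfl 0 (Nat.zero_le _) h0 t
    have hg : gFun Ck θ t t = cFun Ck θ t t t := by
      simp [gFun, cFun, Nat.min_self]
    rw [hg]
    simpa using H
  | succ τ htτ ih =>
    obtain ⟨ih1, ih2⟩ := ih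
    obtain ⟨s, rfl⟩ : ∃ s, τ = s + 1 := ⟨τ - 1, by omega⟩
    have htrans : phiFun Ck θ t (s + 1 + 1) 0 = phiFun Ck θ t (s + 1) (s + 1) := by
      simp only [phiFun, innerLoop_zero]
      have hw : Wfun Ck θ t (s + 1 + 1) = Wfun Ck θ t (s + 1) + xval Ck θ (s + 1) := by
        unfold Wfun
        exact Finset.sum_Ico_succ_top htτ _
      rw [hw, ← xval_succ]
      ring
    have h0 : 1 / θ * (1 + 1 / CM) ^ gFun Ck θ t (s + 1) ≤ phiFun Ck θ t (s + 1 + 1) 0 := by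
      rw [htrans]; exact ih1
    have H := inner_invariant Ck CM θ Fn hCk1 hCkM hθ hθ1 t ht (s + 1 + 1) (by omega)
      (gFun Ck θ t (s + 1)) ih2 h0 (s + 1 + 1)
    have hg : gFun Ck θ t (s + 1 + 1)
        = gFun Ck θ t (s + 1) + cFun Ck θ t (s + 1 + 1) (s + 1 + 1) := by
      simp only [gFun, cFun]
      rw [Finset.sum_Icc_succ_top (by omega : t ≤ s + 1 + 1),
        Nat.min_eq_right (by omega : t ≤ s + 1 + 1)]
    rw [hg]
    exact H

/-- bounded number of updates: for every slot `t ∈ {1,…,T}`, the number of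
pairs `(j, τ)` with `1 ≤ j ≤ t ≤ τ ≤ T` for which the update condition of Alg. 1 holds at
iteration `j` of slot `τ` is at most `⌊C_1⌋`. -/
theorem stmt6 (N M T : ℕ) (hN : 1 ≤ N) (hM : 1 ≤ M) (hT : 1 ≤ T)
    (ind : ℕ → ℕ → ℕ → ℝ)
    (hind01 : ∀ i k t, ind i k t = 0 ∨ ind i k t = 1)
    (hmono : ∀ i k k' t, k ≤ k' → ind i k t = 1 → ind i k' t = 1)
    (hcov : ∀ i t, ind i M t = 1)
    (C : ℕ → ℝ) (hC1 : 1 ≤ C 1)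
    (hCmono : ∀ k k', 1 ≤ k → k ≤ k' → k' ≤ M → C k ≤ C k') :
    ∀ t ∈ Finset.Icc 1 T,
      ((((Finset.Icc 1 t) ×ˢ (Finset.Icc t T)).filter
          (fun p => algCond (fun τ => C (kstar ind N τ)) (thetaOf C M) p.2 p.1)).card : ℤ)
        ≤ ⌊C 1⌋ := by
  intro t htmem
  obtain ⟨ht1, htT⟩ := Finset.mem_Icc.mp htmem
  set Ck : ℕ → ℝ := fun τ => C (kstar ind N τ) with hCkdef
  set θ : ℝ := thetaOf C M with hθdef
  -- bounds on kstar
  have hkstar : ∀ τ, 1 ≤ kstar ind N τ ∧ kstar ind N τ ≤ M := by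
    intro τ
    have hMmem : M ∈ {k : ℕ | 1 ≤ k ∧ ∀ i ∈ Finset.Icc 1 N, ind i k τ = 1} :=
      ⟨hM, fun i _ => hcov i τ⟩
    exact ⟨(Nat.sInf_mem ⟨M, hMmem⟩).1, Nat.sInf_le hMmem⟩
  have hCk1 : ∀ τ, 1 ≤ Ck τ := fun τ =>
    hC1.trans (hCmono 1 _ le_rfl (hkstar τ).1 (hkstar τ).2)
  have hCkM : ∀ τ, Ck τ ≤ C M := fun τ =>
    hCmono _ M (hkstar τ).1 (hkstar τ).2 le_rfl
  have hCM : (1:ℝ) ≤ C M := hC1.trans (hCmono 1 M le_rfl hM le_rfl)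
  have hCMpos : (0:ℝ) < C M := lt_of_lt_of_le zero_lt_one hCM
  have hB : (1:ℝ) < 1 + 1 / C M := by
    have : (0:ℝ) < 1 / C M := by positivity
    linarith
  have hfloor : (1:ℤ) ≤ ⌊C 1⌋ := by
    rw [Int.le_floor]; exact_mod_cast hC1
  set Fn : ℕ := ⌊C 1⌋.toNat with hFndef
  have hFn : (Fn:ℤ) = ⌊C 1⌋ := Int.toNat_of_nonneg (by omega)
  have hFn1 : 1 ≤ Fn := by omega
  have hθ1 : θ + 1 = (1 + 1 / C M) ^ Fn := by
    rw [hθdef]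
    unfold thetaOf
    rw [sub_add_cancel, ← hFn, zpow_natCast]
  have hθpos : 0 < θ := by
    have hpow : (1:ℝ) < (1 + 1 / C M) ^ Fn := one_lt_pow₀ hB (by omega)
    linarith [hθ1]
  have hcard : (((Finset.Icc 1 t) ×ˢ (Finset.Icc t T)).filter
      (fun p => algCond Ck θ p.2 p.1)).card = gFun Ck θ t T := by
    rw [Finset.card_filter, Finset.sum_product_right]
    rfl
  have H := (outer_invariant Ck (C M) θ Fn hCk1 hCkM hθpos hθ1 t ht1 T htT).2
  rw [hcard]
  omega


end
end

section
/- Per-iteration primal–dual relation: whenever the update condition of Alg. 1 holds at iteration j of slot t, the resulting increment of the primal objective Σ_{t=1}^T (Σ_{k=1}^M C_k x_k(t) + (1/N) Σ_{i=1}^N Σ_{j=1}^t z_{i,j}(t)) equals 1 + 1/θ, and the resulting increment of the dual objective Σ_{t=1}^T Σ_{i=1}^N Σ_{j=1}^t y_{i,j}(t) equals 1; when the condition fails both increments are 0. Consequently, the final primal objective value P and final dual objective value D computed by Alg. 1 satisfy P = (1 + 1/θ)·D. -/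
open scoped Classical
open MeasureTheory

noncomputable section

/-!
Each iteration `j` of slot `t` that passes the update test raises `x_{k*_t}(t)` by
`(S + 1/θ)/C_{k*_t}`, where `S = Σ_{τ=j}^t x_{k*_τ}(τ)` is the current partial sum, and sets
every `z_{i,j}(t)` to `1 - S` and every `y_{i,j}(t)` to `1/N`. The `S` cancels, so the primal
objective grows by `1 + 1/θ` while the dual grows by `1`; an iteration that fails the test changes
neither. Summing over all iterations, and telescoping the increments of `x_{k*_t}(t)` within
each slot, gives `P = (1 + 1/θ) D`.
-/

lemma sum_Icc_one_sub_pred (f : ℕ → ℝ) (t : ℕ) :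
    ∑ j ∈ Finset.Icc 1 t, (f j - f (j - 1)) = f t - f 0 := by
  induction t with
  | zero => simp
  | succ t ih =>
    rw [Finset.sum_Icc_succ_top (Nat.le_add_left 1 t), ih, Nat.add_sub_cancel]
    ring

lemma one_div_mul_sum_Icc_const {N : ℕ} (hN : N ≠ 0) (a : ℝ) :
    1 / (N : ℝ) * ∑ _i ∈ Finset.Icc 1 N, a = a := by
  rw [Finset.sum_const, Nat.card_Icc, Nat.add_sub_cancel, nsmul_eq_mul]
  field_simp

lemma kstar_mem_Icc {ind : ℕ → ℕ → ℕ → ℝ} {N M t : ℕ} (hM : 1 ≤ M)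
    (hcov : ∀ i ∈ Finset.Icc 1 N, ind i M t = 1) : kstar ind N t ∈ Finset.Icc 1 M := by
  have hMmem : M ∈ {k : ℕ | 1 ≤ k ∧ ∀ i ∈ Finset.Icc 1 N, ind i k t = 1} := ⟨hM, hcov⟩
  exact Finset.mem_Icc.mpr ⟨(Nat.sInf_mem ⟨M, hMmem⟩).1, Nat.sInf_le hMmem⟩

lemma xval_eq_innerLoop (Ck : ℕ → ℝ) (θ : ℝ) (t : ℕ) :
    xval Ck θ t = innerLoop (Ck t) θ (psFun Ck θ t) t := by
  cases t with
  | zero => rfl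
  | succ t => rw [xval, xvec, if_pos rfl]; rfl

section PrimalDual

variable (Ck : ℕ → ℝ) (θ : ℝ) (N : ℕ)

def primalIncr (t j : ℕ) : ℝ :=
  Ck t * (innerLoop (Ck t) θ (psFun Ck θ t) j - innerLoop (Ck t) θ (psFun Ck θ t) (j - 1))
    + 1 / (N : ℝ) * ∑ _i ∈ Finset.Icc 1 N, zval Ck θ j t

def dualIncr (t j : ℕ) : ℝ :=
  ∑ _i ∈ Finset.Icc 1 N, yval Ck θ N j t

variable {Ck θ N} {t j : ℕ}

lemma primalIncr_of_algCond (hC : Ck t ≠ 0) (hN : N ≠ 0) (hj : 1 ≤ j)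
    (h : algCond Ck θ t j) : primalIncr Ck θ N t j = 1 + 1 / θ := by
  obtain ⟨j, rfl⟩ := Nat.exists_eq_add_of_le' hj
  have hlt := h
  rw [algCond, Nat.add_sub_cancel] at hlt
  rw [primalIncr, zval, if_pos h, one_div_mul_sum_Icc_const hN, innerLoop, if_pos hlt,
    Nat.add_sub_cancel]
  field_simp
  ring

lemma primalIncr_of_not_algCond (hj : 1 ≤ j) (h : ¬ algCond Ck θ t j) :
    primalIncr Ck θ N t j = 0 := by
  obtain ⟨j, rfl⟩ := Nat.exists_eq_add_of_le' hj
  have hlt := h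
  rw [algCond, Nat.add_sub_cancel] at hlt
  rw [primalIncr, zval, if_neg h, innerLoop, if_neg hlt, Nat.add_sub_cancel]
  simp

lemma dualIncr_of_algCond (hN : N ≠ 0) (h : algCond Ck θ t j) : dualIncr Ck θ N t j = 1 := by
  rw [dualIncr, yval, if_pos h, Finset.sum_const, Nat.card_Icc, Nat.add_sub_cancel,
    nsmul_eq_mul]
  field_simp

lemma dualIncr_of_not_algCond (h : ¬ algCond Ck θ t j) : dualIncr Ck θ N t j = 0 := by
  simp only [dualIncr, yval, if_neg h, Finset.sum_const_zero]

lemma primalIncr_eq_mul_dualIncr (hC : Ck t ≠ 0) (hN : N ≠ 0) (hj : 1 ≤ j) :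
    primalIncr Ck θ N t j = (1 + 1 / θ) * dualIncr Ck θ N t j := by
  by_cases h : algCond Ck θ t j
  · rw [primalIncr_of_algCond hC hN hj h, dualIncr_of_algCond hN h, mul_one]
  · rw [primalIncr_of_not_algCond hj h, dualIncr_of_not_algCond h, mul_zero]

lemma slot_primal_eq_sum_primalIncr :
    Ck t * xval Ck θ t + 1 / (N : ℝ) * ∑ _i ∈ Finset.Icc 1 N, ∑ j ∈ Finset.Icc 1 t, zval Ck θ j t
      = ∑ j ∈ Finset.Icc 1 t, primalIncr Ck θ N t j := by
  have htel := sum_Icc_one_sub_pred (innerLoop (Ck t) θ (psFun Ck θ t)) t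
  rw [innerLoop, sub_zero, ← xval_eq_innerLoop] at htel
  simp only [primalIncr, Finset.sum_add_distrib, ← Finset.mul_sum, htel]
  rw [Finset.sum_comm]

lemma slot_primal_eq_mul_slot_dual (hC : Ck t ≠ 0) (hN : N ≠ 0) :
    Ck t * xval Ck θ t + 1 / (N : ℝ) * ∑ _i ∈ Finset.Icc 1 N, ∑ j ∈ Finset.Icc 1 t, zval Ck θ j t
      = (1 + 1 / θ) * ∑ _i ∈ Finset.Icc 1 N, ∑ j ∈ Finset.Icc 1 t, yval Ck θ N j t := by
  rw [slot_primal_eq_sum_primalIncr, Finset.sum_comm, Finset.mul_sum]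
  exact Finset.sum_congr rfl fun j hj =>
    primalIncr_eq_mul_dualIncr hC hN (Finset.mem_Icc.mp hj).1

end PrimalDual

theorem stmt8_general (N M T : ℕ) (hN : 1 ≤ N) (hM : 1 ≤ M)
    (ind : ℕ → ℕ → ℕ → ℝ)
    (hcov : ∀ i t, ind i M t = 1)
    (C : ℕ → ℝ) (hC1 : 1 ≤ C 1)
    (hCmono : ∀ k k', 1 ≤ k → k ≤ k' → k' ≤ M → C k ≤ C k') :
    (∀ t ∈ Finset.Icc 1 T, ∀ j ∈ Finset.Icc 1 t,
      (algCond (fun τ => C (kstar ind N τ)) (thetaOf C M) t j →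
        C (kstar ind N t)
            * (innerLoop (C (kstar ind N t)) (thetaOf C M)
                  (psFun (fun τ => C (kstar ind N τ)) (thetaOf C M) t) j
                - innerLoop (C (kstar ind N t)) (thetaOf C M)
                    (psFun (fun τ => C (kstar ind N τ)) (thetaOf C M) t) (j - 1))
          + (1 / N) * ∑ i ∈ Finset.Icc 1 N,
              zval (fun τ => C (kstar ind N τ)) (thetaOf C M) j t
          = 1 + 1 / thetaOf C M
        ∧ ∑ i ∈ Finset.Icc 1 N, yval (fun τ => C (kstar ind N τ)) (thetaOf C M) N j t = 1)
      ∧ (¬ algCond (fun τ => C (kstar ind N τ)) (thetaOf C M) t j →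
        C (kstar ind N t)
            * (innerLoop (C (kstar ind N t)) (thetaOf C M)
                  (psFun (fun τ => C (kstar ind N τ)) (thetaOf C M) t) j
                - innerLoop (C (kstar ind N t)) (thetaOf C M)
                    (psFun (fun τ => C (kstar ind N τ)) (thetaOf C M) t) (j - 1))
          + (1 / N) * ∑ i ∈ Finset.Icc 1 N,
              zval (fun τ => C (kstar ind N τ)) (thetaOf C M) j t
          = 0
        ∧ ∑ i ∈ Finset.Icc 1 N,
            yval (fun τ => C (kstar ind N τ)) (thetaOf C M) N j t = 0)) ∧
    (∑ t ∈ Finset.Icc 1 T,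
        (∑ k ∈ Finset.Icc 1 M,
            C k * (if k = kstar ind N t then
                xval (fun τ => C (kstar ind N τ)) (thetaOf C M) t else 0)
          + (1 / N) * ∑ i ∈ Finset.Icc 1 N, ∑ j ∈ Finset.Icc 1 t,
              zval (fun τ => C (kstar ind N τ)) (thetaOf C M) j t)
      = (1 + 1 / thetaOf C M)
          * ∑ t ∈ Finset.Icc 1 T, ∑ i ∈ Finset.Icc 1 N, ∑ j ∈ Finset.Icc 1 t,
              yval (fun τ => C (kstar ind N τ)) (thetaOf C M) N j t) := by
  set Ck : ℕ → ℝ := fun τ => C (kstar ind N τ)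
  have hN0 : N ≠ 0 := Nat.one_le_iff_ne_zero.mp hN
  have hks : ∀ t, kstar ind N t ∈ Finset.Icc 1 M := fun t =>
    kstar_mem_Icc hM fun i _ => hcov i t
  have hC : ∀ t, Ck t ≠ 0 := fun t => by
    obtain ⟨h1, hkM⟩ := Finset.mem_Icc.mp (hks t)
    linarith [hCmono 1 _ le_rfl h1 hkM]
  refine ⟨fun t _ j hj => ?_, ?_⟩
  · have hj1 := (Finset.mem_Icc.mp hj).1
    exact ⟨fun h => ⟨primalIncr_of_algCond (hC t) hN0 hj1 h, dualIncr_of_algCond hN0 h⟩,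
      fun h => ⟨primalIncr_of_not_algCond hj1 h, dualIncr_of_not_algCond h⟩⟩
  · rw [Finset.mul_sum]
    refine Finset.sum_congr rfl fun t _ => ?_
    simp only [mul_ite, mul_zero, Finset.sum_ite_eq', hks t, if_true]
    exact slot_primal_eq_mul_slot_dual (hC t) hN0

/-- per-iteration primal–dual relation for Alg. 1: whenever the update
condition holds at iteration `j` of slot `t`, the increment of the primal objective
(`C_{k*_t}` times the increase of `x_{k*_t}(t)`, plus `(1/N) Σ_i z_{i,j}(t)`) equals
`1 + 1/θ` and the increment of the dual objective equals `1`; when the condition fails both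
increments are `0`.  Consequently the final primal objective `P` and the final dual
objective `D` satisfy `P = (1 + 1/θ)·D`. -/
theorem stmt8 (N M T : ℕ) (hN : 1 ≤ N) (hM : 1 ≤ M) (hT : 1 ≤ T)
    (ind : ℕ → ℕ → ℕ → ℝ)
    (hind01 : ∀ i k t, ind i k t = 0 ∨ ind i k t = 1)
    (hmono : ∀ i k k' t, k ≤ k' → ind i k t = 1 → ind i k' t = 1)
    (hcov : ∀ i t, ind i M t = 1)
    (C : ℕ → ℝ) (hC1 : 1 ≤ C 1)
    (hCmono : ∀ k k', 1 ≤ k → k ≤ k' → k' ≤ M → C k ≤ C k') :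
    (∀ t ∈ Finset.Icc 1 T, ∀ j ∈ Finset.Icc 1 t,
      (algCond (fun τ => C (kstar ind N τ)) (thetaOf C M) t j →
        C (kstar ind N t)
            * (innerLoop (C (kstar ind N t)) (thetaOf C M)
                  (psFun (fun τ => C (kstar ind N τ)) (thetaOf C M) t) j
                - innerLoop (C (kstar ind N t)) (thetaOf C M)
                    (psFun (fun τ => C (kstar ind N τ)) (thetaOf C M) t) (j - 1))
          + (1 / N) * ∑ i ∈ Finset.Icc 1 N,
              zval (fun τ => C (kstar ind N τ)) (thetaOf C M) j t
          = 1 + 1 / thetaOf C M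
        ∧ ∑ i ∈ Finset.Icc 1 N, yval (fun τ => C (kstar ind N τ)) (thetaOf C M) N j t = 1)
      ∧ (¬ algCond (fun τ => C (kstar ind N τ)) (thetaOf C M) t j →
        C (kstar ind N t)
            * (innerLoop (C (kstar ind N t)) (thetaOf C M)
                  (psFun (fun τ => C (kstar ind N τ)) (thetaOf C M) t) j
                - innerLoop (C (kstar ind N t)) (thetaOf C M)
                    (psFun (fun τ => C (kstar ind N τ)) (thetaOf C M) t) (j - 1))
          + (1 / N) * ∑ i ∈ Finset.Icc 1 N,
              zval (fun τ => C (kstar ind N τ)) (thetaOf C M) j t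
          = 0
        ∧ ∑ i ∈ Finset.Icc 1 N,
            yval (fun τ => C (kstar ind N τ)) (thetaOf C M) N j t = 0)) ∧
    (∑ t ∈ Finset.Icc 1 T,
        (∑ k ∈ Finset.Icc 1 M,
            C k * (if k = kstar ind N t then
                xval (fun τ => C (kstar ind N τ)) (thetaOf C M) t else 0)
          + (1 / N) * ∑ i ∈ Finset.Icc 1 N, ∑ j ∈ Finset.Icc 1 t,
              zval (fun τ => C (kstar ind N τ)) (thetaOf C M) j t)
      = (1 + 1 / thetaOf C M)
          * ∑ t ∈ Finset.Icc 1 T, ∑ i ∈ Finset.Icc 1 N, ∑ j ∈ Finset.Icc 1 t,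
              yval (fun τ => C (kstar ind N τ)) (thetaOf C M) N j t) :=
  stmt8_general N M T hN hM ind hcov C hC1 hCmono

end
end
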